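/- arXiv:2110.09671 — 2 statements merged into one kernel-verified Lean document; each statement's English description precedes it below -/
import Mathlib

section
/- Let K be an n×n complex Hermitian positive definite matrix, h ∈ ℂⁿ with h ≠ 0, and let α ∈ (0,1], γ > 0, λ > 0 be reals. Define Z = α·K − α²λ·h hᴴ and suppose Z is positive definite. Then α²λ·(hᴴ Z⁻¹ h) = γ if and only if λ = 1 / (α(1 + 1/γ)·(hᴴ K⁻¹ h)). (Both hᴴ Z⁻¹ h and hᴴ K⁻¹ h are positive real numbers.) -/
/-!
Put `s = hᴴ Z⁻¹ h`, `t = hᴴ K⁻¹ h` and `u = Z⁻¹ h`. The equation `Z u = h` reads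
`α K u = (1 + α²λ s) h`; applying `K⁻¹` and pairing with `hᴴ` gives the Sherman–Morrison type
relation `α s = (1 + α²λ s) t`. Both `s` and `t` are real, being quadratic forms of Hermitian
matrices, and under this relation the equivalence is plain field arithmetic.
-/

open Matrix
open scoped ComplexOrder

theorem mul_dotProduct_inv_smul_sub_vecMulVec_mulVec {ι R : Type*} [Fintype ι] [DecidableEq ι]
    [CommRing R] {K : Matrix ι ι R} (hK : IsUnit K.det) (a c : R) (v w : ι → R)
    (hZ : IsUnit (a • K - c • vecMulVec v w).det) :
    a * (w ⬝ᵥ (a • K - c • vecMulVec v w)⁻¹ *ᵥ v)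
      = (1 + c * (w ⬝ᵥ (a • K - c • vecMulVec v w)⁻¹ *ᵥ v)) * (w ⬝ᵥ K⁻¹ *ᵥ v) := by
  set u := (a • K - c • vecMulVec v w)⁻¹ *ᵥ v
  have hZu : (a • K - c • vecMulVec v w) *ᵥ u = v := by
    rw [mulVec_mulVec, mul_nonsing_inv _ hZ, one_mulVec]
  have hKu : K *ᵥ (a • u) = (1 + c * (w ⬝ᵥ u)) • v := by
    rw [sub_mulVec, smul_mulVec, smul_mulVec, vecMulVec_mulVec, sub_eq_iff_eq_add] at hZu
    rw [mulVec_smul, hZu, op_smul_eq_smul, smul_smul, add_smul, one_smul]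
  have hu : a • u = (1 + c * (w ⬝ᵥ u)) • K⁻¹ *ᵥ v :=
    calc a • u = K⁻¹ *ᵥ (K *ᵥ (a • u)) := by rw [mulVec_mulVec, nonsing_inv_mul _ hK, one_mulVec]
      _ = _ := by rw [hKu, mulVec_smul]
  simpa only [dotProduct_smul, smul_eq_mul] using congrArg (w ⬝ᵥ ·) hu

theorem Matrix.IsHermitian.ofReal_re_star_dotProduct_mulVec {ι : Type*} [Fintype ι]
    {A : Matrix ι ι ℂ} (hA : A.IsHermitian) (x : ι → ℂ) :
    ((star x ⬝ᵥ A *ᵥ x).re : ℂ) = star x ⬝ᵥ A *ᵥ x :=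
  Complex.conj_eq_iff_re.1 (Complex.conj_eq_iff_im.2 (hA.im_star_dotProduct_mulVec_self x))

theorem sq_mul_mul_eq_iff_eq_one_div {F : Type*} [Field F] {a s t g l : F} (hg : g ≠ 0)
    (hl : l ≠ 0) (key : a * s = (1 + a ^ 2 * l * s) * t) :
    a ^ 2 * l * s = g ↔ l = 1 / (a * (1 + 1 / g) * t) := by
  have hexpand : a * (1 + 1 / g) * t = a * (1 + g) * t / g := by field_simp; ring
  rw [hexpand, one_div_div]
  constructor
  · intro hsinr
    have hs : a * s = (1 + g) * t := by rw [key, hsinr]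
    have hpow : l * (a * (1 + g) * t) = g := by linear_combination (-a * l) * hs + hsinr
    have hden : a * (1 + g) * t ≠ 0 := by
      intro h0; rw [h0, mul_zero] at hpow; exact hg hpow.symm
    rw [eq_div_iff hden, hpow]
  · intro hl'
    have hden : a * (1 + g) * t ≠ 0 := by
      intro h0; rw [h0, div_zero] at hl'; exact hl hl'
    have hpow : l * (a * (1 + g) * t) = g := by rw [hl', div_mul_cancel₀ _ hden]
    have hs : a * s = (1 + g) * t := by linear_combination (1 + g) * key + a * s * hpow
    linear_combination a * l * hs + hpow

theorem stmt4_general {n : ℕ} (K : Matrix (Fin n) (Fin n) ℂ) (hK : K.PosDef)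
    (h : Fin n → ℂ) (α γ lam : ℝ)
    (hγ : 0 < γ) (hlam : 0 < lam)
    (Z : Matrix (Fin n) (Fin n) ℂ)
    (hZdef : Z = (α : ℂ) • K - ((α : ℂ) ^ 2 * (lam : ℂ)) • vecMulVec h (star h))
    (hZ : Z.PosDef) :
    α ^ 2 * lam * (star h ⬝ᵥ Z⁻¹.mulVec h).re = γ ↔
      lam = 1 / (α * (1 + 1 / γ) * (star h ⬝ᵥ K⁻¹.mulVec h).re) := by
  have key := mul_dotProduct_inv_smul_sub_vecMulVec_mulVec
    ((isUnit_iff_isUnit_det K).1 hK.isUnit) (α : ℂ) ((α : ℂ) ^ 2 * (lam : ℂ)) h (star h)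
    (hZdef ▸ (isUnit_iff_isUnit_det Z).1 hZ.isUnit)
  rw [← hZdef, ← hZ.isHermitian.inv.ofReal_re_star_dotProduct_mulVec h,
    ← hK.isHermitian.inv.ofReal_re_star_dotProduct_mulVec h] at key
  exact sq_mul_mul_eq_iff_eq_one_div hγ.ne' hlam.ne' (by exact_mod_cast key)

/-- For Hermitian positive definite `K`, `h ≠ 0`, `α ∈ (0,1]`, `γ > 0`,
`λ > 0`, and `Z = α·K − α²λ·h hᴴ` positive definite, the MMSE-combined uplink SINR
meets the target with equality, `α²λ·(hᴴ Z⁻¹ h) = γ`, iff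
`λ = 1 / (α(1 + 1/γ)·(hᴴ K⁻¹ h))`. -/
theorem stmt4 {n : ℕ} (K : Matrix (Fin n) (Fin n) ℂ) (hK : K.PosDef)
    (h : Fin n → ℂ) (hh : h ≠ 0) (α γ lam : ℝ)
    (hα : 0 < α ∧ α ≤ 1) (hγ : 0 < γ) (hlam : 0 < lam)
    (Z : Matrix (Fin n) (Fin n) ℂ)
    (hZdef : Z = (α : ℂ) • K - ((α : ℂ) ^ 2 * (lam : ℂ)) • vecMulVec h (star h))
    (hZ : Z.PosDef) :
    α ^ 2 * lam * (star h ⬝ᵥ Z⁻¹.mulVec h).re = γ ↔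
      lam = 1 / (α * (1 + 1 / γ) * (star h ⬝ᵥ K⁻¹.mulVec h).re) :=
  stmt4_general K hK h α γ lam hγ hlam Z hZdef hZ
end

section
/- Let h_{j,i,u} ∈ ℂ^{N_b}, w_{i,u} ∈ ℂ^{N_b}, real multipliers λ_{i,u} and μ_{i,m}, set D_i = diag(μ_{i,1},…,μ_{i,N_b}), let α, β be reals with α = 1 − β, let p₀, σ², γ_{i,u} > 0 be reals, and let Q_{i,u} = αβ ∑_j h_{j,i,u}ᴴ diag(∑_v w_{j,v} w_{j,v}ᴴ) h_{j,i,u}. Then the Lagrangian L = N_c N_b p₀ − ∑_{i,u} λ_{i,u}( (α²/γ_{i,u})|w_{i,u}ᴴ h_{i,i,u}|² − α² ∑_{(j,v)≠(i,u)} |h_{j,i,u}ᴴ w_{j,v}|² − Q_{i,u} − σ² ) + ∑_{i,m} μ_{i,m}( α[W_i W_iᴴ]_{m,m} − p₀ ) equals ∑_{i,u} λ_{i,u} σ² − p₀ ∑_i ( tr(D_i) − N_b ) + ∑_{i,u} w_{i,u}ᴴ ( α D_i − α²(1 + 1/γ_{i,u}) λ_{i,u} h_{i,i,u} h_{i,i,u}ᴴ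 + α² ∑_{j,v} λ_{j,v} h_{i,j,v} h_{i,j,v}ᴴ + αβ·diag(∑_{j,v} λ_{j,v} h_{i,j,v} h_{i,j,v}ᴴ) ) w_{i,u}. -/
/-!
Expand every quadratic form on the right: `w ᴴ (a aᴴ) w = |aᴴ w|²` and
`x ᴴ diag(d) x = ∑ₘ dₘ |xₘ|²`. The power terms then match `μ`-term by `μ`-term, the
signal terms combine into `α²(1 + 1/γ)`, and the interference and quantization terms match
after exchanging the roles of the user `(i, u)` whose constraint carries the multiplier and
the user `(j, v)` whose beamformer causes the interference.
-/

open Matrix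

namespace Matrix

theorem vecMulVec_star_self_apply_self {n : Type*} (a : n → ℂ) (m : n) :
    vecMulVec a (star a) m m = ((‖a m‖ ^ 2 : ℝ) : ℂ) := by
  rw [vecMulVec_apply, Pi.star_apply, Complex.star_def, Complex.mul_conj', Complex.ofReal_pow]

variable {n : Type*} [Fintype n]

theorem norm_star_dotProduct_comm (a b : n → ℂ) : ‖star a ⬝ᵥ b‖ = ‖star b ⬝ᵥ a‖ := by
  rw [star_dotProduct, norm_star]

theorem star_dotProduct_vecMulVec_star_self_mulVec (x a : n → ℂ) :
    star x ⬝ᵥ vecMulVec a (star a) *ᵥ x = ((‖star a ⬝ᵥ x‖ ^ 2 : ℝ) : ℂ) := by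
  rw [vecMulVec_mulVec, dotProduct_smul, MulOpposite.smul_eq_mul_unop, MulOpposite.unop_op,
    star_dotProduct x, mul_comm, Complex.star_def, Complex.mul_conj', Complex.ofReal_pow]

theorem star_dotProduct_diagonal_mulVec [DecidableEq n] (d x : n → ℂ) :
    star x ⬝ᵥ diagonal d *ᵥ x = ∑ m, d m * ((‖x m‖ ^ 2 : ℝ) : ℂ) := by
  refine Finset.sum_congr rfl fun m _ => ?_
  rw [mulVec_diagonal, Pi.star_apply, Complex.star_def, mul_left_comm, Complex.conj_mul',
    Complex.ofReal_pow]

end Matrix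

section Lagrangian

variable {κ ν n : Type*} [Fintype κ] [Fintype ν] [Fintype n]

theorem Finset.sum_sum_mul_sum_prod_comm {R : Type*} [CommSemiring R] (c : κ → ν → R)
    (K : κ → ν → κ → ν → R) :
    ∑ i, ∑ u, c i u * ∑ p : κ × ν, K p.1 p.2 i u
      = ∑ i, ∑ u, ∑ p : κ × ν, c p.1 p.2 * K i u p.1 p.2 := by
  rw [← Fintype.sum_prod_type' fun i u => c i u * ∑ p : κ × ν, K p.1 p.2 i u,
    ← Fintype.sum_prod_type' fun i u => ∑ p : κ × ν, c p.1 p.2 * K i u p.1 p.2]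
  simp only [Finset.mul_sum]
  exact Finset.sum_comm

theorem sum_sum_mul_sum_norm_sq_eq_sum_sum_star_dotProduct_mulVec (c : κ → ν → ℂ)
    (H : κ → κ → ν → n → ℂ) (w : κ → ν → n → ℂ) :
    ∑ i, ∑ u, c i u * ∑ p : κ × ν, ((‖star (H p.1 i u) ⬝ᵥ w p.1 p.2‖ ^ 2 : ℝ) : ℂ)
      = ∑ i, ∑ u, star (w i u) ⬝ᵥ (∑ p : κ × ν,
          c p.1 p.2 • vecMulVec (H i p.1 p.2) (star (H i p.1 p.2))) *ᵥ w i u := by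
  simp only [sum_mulVec, dotProduct_sum, smul_mulVec, dotProduct_smul, smul_eq_mul,
    star_dotProduct_vecMulVec_star_self_mulVec]
  exact Finset.sum_sum_mul_sum_prod_comm c fun j v i u =>
    ((‖star (H j i u) ⬝ᵥ w j v‖ ^ 2 : ℝ) : ℂ)

theorem sum_sum_mul_sum_star_dotProduct_diagonal_diag_mulVec_comm [DecidableEq n]
    (c : κ → ν → ℂ) (H : κ → κ → ν → n → ℂ) (w : κ → ν → n → ℂ) :
    ∑ i, ∑ u, c i u * ∑ j, star (H j i u) ⬝ᵥ
        diagonal (diag (∑ v, vecMulVec (w j v) (star (w j v)))) *ᵥ H j i u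
      = ∑ i, ∑ u, star (w i u) ⬝ᵥ diagonal (diag (∑ p : κ × ν,
          c p.1 p.2 • vecMulVec (H i p.1 p.2) (star (H i p.1 p.2)))) *ᵥ w i u := by
  let K : κ → ν → κ → ν → ℂ := fun j v i u =>
    ∑ m, ((‖w j v m‖ ^ 2 : ℝ) : ℂ) * ((‖H j i u m‖ ^ 2 : ℝ) : ℂ)
  have hlhs : ∀ i u, ∑ j, star (H j i u) ⬝ᵥ
      diagonal (diag (∑ v, vecMulVec (w j v) (star (w j v)))) *ᵥ H j i u
        = ∑ p : κ × ν, K p.1 p.2 i u := by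
    intro i u
    simp only [star_dotProduct_diagonal_mulVec, diag_apply, Matrix.sum_apply,
      vecMulVec_star_self_apply_self, Finset.sum_mul, K]
    rw [Fintype.sum_prod_type]
    exact Finset.sum_congr rfl fun j _ => Finset.sum_comm
  have hrhs : ∀ i u, star (w i u) ⬝ᵥ diagonal (diag (∑ p : κ × ν,
      c p.1 p.2 • vecMulVec (H i p.1 p.2) (star (H i p.1 p.2)))) *ᵥ w i u
        = ∑ p : κ × ν, c p.1 p.2 * K i u p.1 p.2 := by
    intro i u
    simp only [star_dotProduct_diagonal_mulVec, diag_apply, Matrix.sum_apply, Matrix.smul_apply,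
      smul_eq_mul, vecMulVec_star_self_apply_self, Finset.sum_mul, Finset.mul_sum, K]
    rw [Finset.sum_comm]
    exact Finset.sum_congr rfl fun p _ => Finset.sum_congr rfl fun m _ => by ring
  simp only [hlhs, hrhs]
  exact Finset.sum_sum_mul_sum_prod_comm c K

theorem sum_mul_mul_sum_vecMulVec_apply_sub [DecidableEq n] (μ : n → ℂ) (w : ν → n → ℂ)
    (a b : ℂ) :
    ∑ m, μ m * (a * (∑ u, vecMulVec (w u) (star (w u))) m m - b)
      = ∑ u, a * (star (w u) ⬝ᵥ diagonal μ *ᵥ w u) - b * trace (diagonal μ) := by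
  simp only [star_dotProduct_diagonal_mulVec, Matrix.sum_apply, vecMulVec_star_self_apply_self,
    trace_diagonal, mul_sub, Finset.sum_sub_distrib, Finset.mul_sum]
  congr 1
  · rw [Finset.sum_comm]
    exact Finset.sum_congr rfl fun u _ => Finset.sum_congr rfl fun m _ => by ring
  · exact Finset.sum_congr rfl fun m _ => mul_comm _ _

end Lagrangian

theorem stmt11_general {Nb Nc Nu : ℕ}
    (h : Fin Nc → Fin Nc → Fin Nu → (Fin Nb → ℂ))
    (w : Fin Nc → Fin Nu → (Fin Nb → ℂ))
    (lam : Fin Nc → Fin Nu → ℝ) (μ : Fin Nc → Fin Nb → ℝ)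
    (α β : ℝ)
    (p₀ σsq : ℝ) (γ : Fin Nc → Fin Nu → ℝ)
    (Q : Fin Nc → Fin Nu → ℂ)
    (hQ : ∀ i u, Q i u = ((α * β : ℝ) : ℂ) *
      ∑ j : Fin Nc, star (h j i u) ⬝ᵥ
        (diagonal (diag (∑ v : Fin Nu, vecMulVec (w j v) (star (w j v))))).mulVec (h j i u))
    (L : ℂ)
    (hL : L = ((Nc * Nb : ℕ) : ℂ) * (p₀ : ℂ)
      - ∑ i : Fin Nc, ∑ u : Fin Nu, (lam i u : ℂ) *
          (((α : ℂ) ^ 2 / (γ i u : ℂ)) * ((‖star (w i u) ⬝ᵥ h i i u‖ ^ 2 : ℝ) : ℂ)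
            - (α : ℂ) ^ 2 * ∑ p ∈ Finset.univ.erase (i, u),
                ((‖star (h p.1 i u) ⬝ᵥ w p.1 p.2‖ ^ 2 : ℝ) : ℂ)
            - Q i u - (σsq : ℂ))
      + ∑ i : Fin Nc, ∑ m : Fin Nb, (μ i m : ℂ) *
          ((α : ℂ) * (∑ u : Fin Nu, vecMulVec (w i u) (star (w i u))) m m - (p₀ : ℂ))) :
    L = ∑ i : Fin Nc, ∑ u : Fin Nu, (lam i u : ℂ) * (σsq : ℂ)
      - (p₀ : ℂ) * ∑ i : Fin Nc,
          (trace (diagonal (fun m => (μ i m : ℂ))) - (Nb : ℂ))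
      + ∑ i : Fin Nc, ∑ u : Fin Nu, star (w i u) ⬝ᵥ
          (((α : ℂ) • diagonal (fun m => (μ i m : ℂ))
            - ((α : ℂ) ^ 2 * (1 + 1 / (γ i u : ℂ)) * (lam i u : ℂ)) •
                vecMulVec (h i i u) (star (h i i u))
            + ((α : ℂ) ^ 2) • ∑ p : Fin Nc × Fin Nu,
                (lam p.1 p.2 : ℂ) • vecMulVec (h i p.1 p.2) (star (h i p.1 p.2))
            + ((α * β : ℝ) : ℂ) • diagonal (diag (∑ p : Fin Nc × Fin Nu,
                (lam p.1 p.2 : ℂ) • vecMulVec (h i p.1 p.2) (star (h i p.1 p.2))))).mulVec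
            (w i u)) := by
  subst hL
  have hbracket : ∀ i u, (lam i u : ℂ) *
      (((α : ℂ) ^ 2 / (γ i u : ℂ)) * ((‖star (w i u) ⬝ᵥ h i i u‖ ^ 2 : ℝ) : ℂ)
        - (α : ℂ) ^ 2 * ∑ p ∈ Finset.univ.erase (i, u),
            ((‖star (h p.1 i u) ⬝ᵥ w p.1 p.2‖ ^ 2 : ℝ) : ℂ)
        - Q i u - (σsq : ℂ))
      = ((α : ℂ) ^ 2 * (1 + 1 / (γ i u : ℂ)) * (lam i u : ℂ)) *
            ((‖star (h i i u) ⬝ᵥ w i u‖ ^ 2 : ℝ) : ℂ)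
        - (α : ℂ) ^ 2 * ((lam i u : ℂ) *
            ∑ p : Fin Nc × Fin Nu, ((‖star (h p.1 i u) ⬝ᵥ w p.1 p.2‖ ^ 2 : ℝ) : ℂ))
        - ((α * β : ℝ) : ℂ) * ((lam i u : ℂ) * ∑ j : Fin Nc, star (h j i u) ⬝ᵥ
            diagonal (diag (∑ v : Fin Nu, vecMulVec (w j v) (star (w j v)))) *ᵥ h j i u)
        - (lam i u : ℂ) * (σsq : ℂ) := by
    intro i u
    rw [hQ, Finset.sum_erase_eq_sub (Finset.mem_univ _), norm_star_dotProduct_comm (w i u)]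
    ring
  simp only [hbracket, sum_mul_mul_sum_vecMulVec_apply_sub, add_mulVec, sub_mulVec, smul_mulVec,
    dotProduct_add, dotProduct_sub, dotProduct_smul, smul_eq_mul,
    star_dotProduct_vecMulVec_star_self_mulVec, Finset.sum_add_distrib, Finset.sum_sub_distrib,
    ← Finset.mul_sum]
  rw [sum_sum_mul_sum_norm_sq_eq_sum_sum_star_dotProduct_mulVec,
    sum_sum_mul_sum_star_dotProduct_diagonal_diag_mulVec_comm]
  simp only [Finset.sum_const, Finset.card_univ, Fintype.card_fin, nsmul_eq_mul]
  push_cast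
  ring

/-- The Lagrangian reformulation (equations (20) and (24)) in the
proof of Theorem 1. With multipliers `λ_{i,u}`, `μ_{i,m}`, `D_i = diag(μ_{i,·})`,
`α = 1 − β`, quantization noise `Q_{i,u}`, the Lagrangian
`L = N_c N_b p₀ − ∑_{i,u} λ_{i,u}((α²/γ_{i,u})|w_{i,u}ᴴ h_{i,i,u}|²
− α² ∑_{(j,v)≠(i,u)} |h_{j,i,u}ᴴ w_{j,v}|² − Q_{i,u} − σ²)
+ ∑_{i,m} μ_{i,m}(α[W_i W_iᴴ]_{m,m} − p₀)`
equals
`∑_{i,u} λ_{i,u} σ² − p₀ ∑_i (tr(D_i) − N_b)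
+ ∑_{i,u} w_{i,u}ᴴ (α D_i − α²(1+1/γ_{i,u}) λ_{i,u} h_{i,i,u} h_{i,i,u}ᴴ
+ α² ∑_{j,v} λ_{j,v} h_{i,j,v} h_{i,j,v}ᴴ
+ αβ·diag(∑_{j,v} λ_{j,v} h_{i,j,v} h_{i,j,v}ᴴ)) w_{i,u}`.
Here `h j i u` denotes the channel `h_{j,i,u}` from BS `j` to user `u` in cell `i`. -/
theorem stmt11 {Nb Nc Nu : ℕ}
    (h : Fin Nc → Fin Nc → Fin Nu → (Fin Nb → ℂ))
    (w : Fin Nc → Fin Nu → (Fin Nb → ℂ))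
    (lam : Fin Nc → Fin Nu → ℝ) (μ : Fin Nc → Fin Nb → ℝ)
    (α β : ℝ) (hαβ : α = 1 - β)
    (p₀ σsq : ℝ) (γ : Fin Nc → Fin Nu → ℝ)
    (hp₀ : 0 < p₀) (hσ : 0 < σsq) (hγ : ∀ i u, 0 < γ i u)
    (Q : Fin Nc → Fin Nu → ℂ)
    (hQ : ∀ i u, Q i u = ((α * β : ℝ) : ℂ) *
      ∑ j : Fin Nc, star (h j i u) ⬝ᵥ
        (diagonal (diag (∑ v : Fin Nu, vecMulVec (w j v) (star (w j v))))).mulVec (h j i u))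
    (L : ℂ)
    (hL : L = ((Nc * Nb : ℕ) : ℂ) * (p₀ : ℂ)
      - ∑ i : Fin Nc, ∑ u : Fin Nu, (lam i u : ℂ) *
          (((α : ℂ) ^ 2 / (γ i u : ℂ)) * ((‖star (w i u) ⬝ᵥ h i i u‖ ^ 2 : ℝ) : ℂ)
            - (α : ℂ) ^ 2 * ∑ p ∈ Finset.univ.erase (i, u),
                ((‖star (h p.1 i u) ⬝ᵥ w p.1 p.2‖ ^ 2 : ℝ) : ℂ)
            - Q i u - (σsq : ℂ))
      + ∑ i : Fin Nc, ∑ m : Fin Nb, (μ i m : ℂ) *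
          ((α : ℂ) * (∑ u : Fin Nu, vecMulVec (w i u) (star (w i u))) m m - (p₀ : ℂ))) :
    L = ∑ i : Fin Nc, ∑ u : Fin Nu, (lam i u : ℂ) * (σsq : ℂ)
      - (p₀ : ℂ) * ∑ i : Fin Nc,
          (trace (diagonal (fun m => (μ i m : ℂ))) - (Nb : ℂ))
      + ∑ i : Fin Nc, ∑ u : Fin Nu, star (w i u) ⬝ᵥ
          (((α : ℂ) • diagonal (fun m => (μ i m : ℂ))
            - ((α : ℂ) ^ 2 * (1 + 1 / (γ i u : ℂ)) * (lam i u : ℂ)) •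
                vecMulVec (h i i u) (star (h i i u))
            + ((α : ℂ) ^ 2) • ∑ p : Fin Nc × Fin Nu,
                (lam p.1 p.2 : ℂ) • vecMulVec (h i p.1 p.2) (star (h i p.1 p.2))
            + ((α * β : ℝ) : ℂ) • diagonal (diag (∑ p : Fin Nc × Fin Nu,
                (lam p.1 p.2 : ℂ) • vecMulVec (h i p.1 p.2) (star (h i p.1 p.2))))).mulVec
            (w i u)) :=
  stmt11_general h w lam μ α β p₀ σsq γ Q hQ L hL
end
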